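/- For m, n ∈ ℤ, let g_m(t) = ∑_{i≥0} λ_i 4^i t^{m-i+1} ∈ ℂ((t⁻¹)). Then the coefficient of t^{-1} in g_m'(t) · g_n(t) equals (4m+2) δ_{m+n+1,0} + (m+1) δ_{m+n+2,0}. -/

import Mathlib

noncomputable def lam (n : ℕ) : ℂ :=
  (∏ k ∈ Finset.range n, ((1 : ℂ) / 2 - k)) / n.factorial

/-- We model ℂ((t⁻¹)) as formal Laurent series in s = t⁻¹, so that t^k
corresponds to `HahnSeries.single (-k) 1`. -/
noncomputable def lderiv (F : LaurentSeries ℂ) : LaurentSeries ℂ where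
  coeff k := (k + 1 : ℤ) • F.coeff (k + 1)
  isPWO_support' := by
    have h : (Function.support fun k : ℤ => (k + 1 : ℤ) • F.coeff (k + 1)) ⊆
        (fun k : ℤ => k - 1) '' F.support := by
      intro k hk
      simp only [Function.mem_support] at hk
      refine ⟨k + 1, ?_, by ring⟩
      simp only [HahnSeries.mem_support]
      intro h0
      apply hk
      rw [h0, smul_zero]
    exact (F.isPWO_support.image_of_monotone (fun a b hab => by omega)).mono h

/-- The derivative d/dt, acting on series in s = t⁻¹: d/dt = -s² d/ds. -/
noncomputable def tderiv (F : LaurentSeries ℂ) : LaurentSeries ℂ :=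
  -(HahnSeries.single (2 : ℤ) (1 : ℂ) * lderiv F)

/-- u = ∑_{i≥0} λ_i 4^i t^{1-i}, i.e. ∑_{i≥0} λ_i 4^i s^{i-1}. -/
noncomputable def uInf : LaurentSeries ℂ :=
  HahnSeries.single (-1 : ℤ) (1 : ℂ) *
    HahnSeries.ofPowerSeries ℤ ℂ (PowerSeries.mk fun i => lam i * 4 ^ i)

/-- g_m = ∑_{i≥0} λ_i 4^i t^{m-i+1} = t^m · u, i.e. s^{-m} · uInf. -/
noncomputable def g (m : ℤ) : LaurentSeries ℂ :=
  HahnSeries.single (-m : ℤ) (1 : ℂ) * uInf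

/-!
Write `s = t⁻¹` and `P(s) = ∑ λ_i 4^i s^i = √(1 + 4s)`, so that `g_m = s^(-m-1) P`. Then
`g_m' = s^(-m) Q_m` with `Q_m = (m + 1) P - s P'`, hence `g_m' g_n = s^(-m-n-1) Q_m P`. From
`P² = 1 + 4s` and its derivative `2 P P' = 4` we get
`Q_m P = (m + 1) P² - s P P' = (m + 1) + (4m + 2) s`, and the coefficient of `t⁻¹ = s` in
`s^(-m-n-1) Q_m P` is the coefficient of `s^(m+n+2)` in this polynomial.
-/

open PowerSeries

theorem ringChoose_eq_prod_div_factorial {K : Type*} [Field K] [CharZero K] (r : K) (n : ℕ) :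
    Ring.choose r n = (∏ k ∈ Finset.range n, (r - k)) / n.factorial := by
  have h := Ring.descPochhammer_eq_factorial_smul_choose r n
  rw [← Polynomial.aeval_eq_smeval, Polynomial.aeval_def, ← Polynomial.eval_map,
    descPochhammer_map, descPochhammer_eval_eq_prod_range, nsmul_eq_mul] at h
  rw [h, mul_div_cancel_left₀ _ (Nat.cast_ne_zero.mpr n.factorial_ne_zero)]

theorem lam_eq_choose (n : ℕ) : lam n = Ring.choose ((1 : ℂ) / 2) n :=
  (ringChoose_eq_prod_div_factorial _ n).symm

theorem coeff_X_mul_derivative {R : Type*} [CommSemiring R] (f : R⟦X⟧) (n : ℕ) :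
    coeff n (X * d⁄dX R f) = n * coeff n f := by
  cases n with
  | zero => simp
  | succ n => rw [coeff_succ_X_mul, coeff_derivative, mul_comm, Nat.cast_succ]

theorem coeff_C_add_C_mul_X {R : Type*} [Semiring R] (a b : R) (n : ℕ) :
    coeff n (C a + C b * X) = (if n = 0 then a else 0) + if n = 1 then b else 0 := by
  rw [map_add, coeff_C, ← pow_one X, coeff_C_mul_X_pow]

theorem coeff_single_one_mul_ofPowerSeries {R : Type*} [Semiring R] (a k : ℤ) (f : R⟦X⟧) :
    (HahnSeries.single a (1 : R) * HahnSeries.ofPowerSeries ℤ R f).coeff k =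
      if k - a < 0 then 0 else coeff (k - a).natAbs f := by
  rw [HahnSeries.coeff_single_mul, one_mul, PowerSeries.coeff_coe]

theorem binomialSeries_half_sq {K : Type*} [Field K] [CharZero K] :
    binomialSeries K ((1 : K) / 2) ^ 2 = 1 + X := by
  rw [sq, ← binomialSeries_add, add_halves, ← Nat.cast_one, binomialSeries_nat, pow_one]

theorem mul_derivative_eq_of_sq_eq {K : Type*} [Field K] [CharZero K] {f : K⟦X⟧} {a : K}
    (h : f ^ 2 = 1 + C a * X) : f * d⁄dX K f = C (a / 2) := by
  have h2 : 2 * f * d⁄dX K f = C a := by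
    simpa [Derivation.leibniz_pow, mul_assoc] using congrArg (d⁄dX K) h
  calc f * d⁄dX K f = C (2⁻¹ * 2) * (f * d⁄dX K f) := by
        rw [inv_mul_cancel₀ two_ne_zero, map_one, one_mul]
    _ = C 2⁻¹ * (2 * f * d⁄dX K f) := by rw [map_mul, map_ofNat]; ring
    _ = C (a / 2) := by rw [h2, ← map_mul, inv_mul_eq_div]

noncomputable def sqrtSeries : ℂ⟦X⟧ := rescale 4 (binomialSeries ℂ ((1 : ℂ) / 2))

theorem sqrtSeries_sq : sqrtSeries ^ 2 = 1 + C 4 * X := by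
  rw [sqrtSeries, ← map_pow, binomialSeries_half_sq, map_add, map_one, rescale_X]

theorem sqrtSeries_mul_X_mul_derivative : sqrtSeries * (X * d⁄dX ℂ sqrtSeries) = C 2 * X := by
  rw [mul_left_comm, mul_derivative_eq_of_sq_eq sqrtSeries_sq, mul_comm]
  norm_num

theorem neg_C_mul_add_X_mul_derivative_mul_sqrtSeries (a : ℂ) :
    -(C (-a) * sqrtSeries + X * d⁄dX ℂ sqrtSeries) * sqrtSeries = C a + C (4 * a - 2) * X := by
  calc -(C (-a) * sqrtSeries + X * d⁄dX ℂ sqrtSeries) * sqrtSeries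
      = C a * sqrtSeries ^ 2 - sqrtSeries * (X * d⁄dX ℂ sqrtSeries) := by rw [map_neg]; ring
    _ = C a + C (4 * a - 2) * X := by
      rw [sqrtSeries_sq, sqrtSeries_mul_X_mul_derivative]
      simp only [map_sub, map_mul, map_ofNat]
      ring

theorem g_eq_single_mul_sqrtSeries (m : ℤ) :
    g m = HahnSeries.single (-m - 1) (1 : ℂ) * HahnSeries.ofPowerSeries ℤ ℂ sqrtSeries := by
  have hP : PowerSeries.mk (fun i => lam i * 4 ^ i) = sqrtSeries := by
    ext i
    simp [sqrtSeries, coeff_rescale, lam_eq_choose, mul_comm]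
  rw [g, uInf, hP, ← mul_assoc, HahnSeries.single_mul_single, one_mul, ← sub_eq_add_neg]

theorem tderiv_single_one_mul_ofPowerSeries (a : ℤ) (f : ℂ⟦X⟧) :
    tderiv (HahnSeries.single a (1 : ℂ) * HahnSeries.ofPowerSeries ℤ ℂ f) =
      HahnSeries.single (a + 1) (1 : ℂ) *
        HahnSeries.ofPowerSeries ℤ ℂ (-(C (a : ℂ) * f + X * d⁄dX ℂ f)) := by
  ext k
  rw [tderiv, HahnSeries.coeff_neg, HahnSeries.coeff_single_mul, one_mul]
  change -((k - 2 + 1 : ℤ) • _) = _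
  rw [coeff_single_one_mul_ofPowerSeries, coeff_single_one_mul_ofPowerSeries,
    show k - 2 + 1 - a = k - (a + 1) by ring]
  split_ifs with hk
  · simp
  · obtain ⟨N, hN⟩ := Int.eq_ofNat_of_zero_le (not_lt.mp hk)
    have hk' : (k : ℂ) = N + a + 1 := by exact_mod_cast (by omega : k = N + a + 1)
    simp only [hN, Int.natAbs_natCast, zsmul_eq_mul, map_neg, map_add, coeff_C_mul,
      coeff_X_mul_derivative]
    push_cast
    rw [hk']
    ring

/-- The coefficient of t⁻¹ (i.e. of s¹) in g_m' · g_n equals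
(4m+2) δ_{m+n+1,0} + (m+1) δ_{m+n+2,0}; here ' is d/dt. -/
theorem res_gderiv_mul_g (m n : ℤ) :
    (tderiv (g m) * g n).coeff 1 =
      (4 * m + 2 : ℂ) * (if m + n + 1 = 0 then 1 else 0) +
        (m + 1 : ℂ) * (if m + n + 2 = 0 then 1 else 0) := by
  have hprod : tderiv (g m) * g n = HahnSeries.single (-m - n - 1) (1 : ℂ) *
      HahnSeries.ofPowerSeries ℤ ℂ (C ((m : ℂ) + 1) + C (4 * ((m : ℂ) + 1) - 2) * X) := by
    rw [g_eq_single_mul_sqrtSeries, g_eq_single_mul_sqrtSeries,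
      tderiv_single_one_mul_ofPowerSeries, mul_mul_mul_comm, HahnSeries.single_mul_single,
      one_mul, ← map_mul, show ((-m - 1 : ℤ) : ℂ) = -((m : ℂ) + 1) by push_cast; ring,
      neg_C_mul_add_X_mul_derivative_mul_sqrtSeries,
      show -m - 1 + 1 + (-n - 1) = -m - n - 1 by ring]
  rw [hprod, coeff_single_one_mul_ofPowerSeries, show 1 - (-m - n - 1) = m + n + 2 by ring]
  rcases lt_or_ge (m + n + 2) 0 with hneg | hnonneg
  · rw [if_pos hneg, if_neg (by omega), if_neg (by omega)]
    ring
  · obtain ⟨N, hN⟩ := Int.eq_ofNat_of_zero_le hnonneg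
    simp only [if_neg (not_lt.mpr hnonneg), show m + n + 1 = 0 ↔ N = 1 by omega,
      show m + n + 2 = 0 ↔ N = 0 by omega]
    rw [hN, Int.natAbs_natCast, coeff_C_add_C_mul_X]
    split_ifs <;> ring
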